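/- For any simplicial complex K (with a linear order on its vertex set), the prism K ⊠ Δ¹ collapses onto K ⊠ {2}; in particular |K ⊠ {2}| is a deformation retract of |K ⊠ Δ¹|. -/

import Mathlib

/-!
Pair each face `τ` of `K ⊠ Δ¹` that has a bottom vertex but no vertex `x` with both
`(x, 0), (x, 1) ∈ τ` with `τ ∪ {(m, 1)}`, where `m` is the largest bottom vertex of `τ`. Every
face outside `K ⊠ {2}` lies in exactly one such pair. Removing the pairs in order of decreasing
weight `#τ + #(bottom vertices of τ)`, each `τ` has `τ ∪ {(m, 1)}` as its only proper coface when
its turn comes, so each removal is an elementary collapse.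

The support of a point `f` of `|K ⊠ Δ¹|` is a chain, so `f` is determined by its fibre masses
`f (x, 0) + f (x, 1)` and the size `∑ x, f (x, 1)` of its top part, which is the topmost portion of
that size of the fibre masses. Raising this size linearly to `1` stays in `|K ⊠ Δ¹|`, ends in the
top copy, and does not move the points of the top copy.
-/

open Finset

/-- A facet is a maximal face. -/
def IsFacet {υ : Type*} (K : Set (Finset υ)) (F : Finset υ) : Prop :=
  F ∈ K ∧ ∀ σ ∈ K, F ⊆ σ → σ = F

/-- A free face: a non-empty face which is not a facet and is contained in exactly one
facet. -/
def IsFreeFace {υ : Type*} (K : Set (Finset υ)) (σ : Finset υ) : Prop :=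
  σ ∈ K ∧ σ ≠ ∅ ∧ ¬ IsFacet K σ ∧ ∃! F, IsFacet K F ∧ σ ⊆ F

/-- An elementary collapse removes a free face together with all faces containing it. -/
def ElemCollapse {υ : Type*} (K K' : Set (Finset υ)) : Prop :=
  ∃ σ, IsFreeFace K σ ∧ K' = {τ ∈ K | ¬ σ ⊆ τ}

/-- `K` collapses onto `K'` if a sequence of elementary collapses leads from `K` to
`K'`. -/
def Collapses {υ : Type*} (K K' : Set (Finset υ)) : Prop :=
  Relation.ReflTransGen ElemCollapse K K'

/-- The ordered simplicial product `K ⊠ L`: faces are the sets of pairs which are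
chains in the componentwise order and whose two projections are faces of `K` and of
`L` respectively. -/
def boxProd {ι κ : Type*} [DecidableEq ι] [DecidableEq κ] [Preorder ι] [Preorder κ]
    (K : Set (Finset ι)) (L : Set (Finset κ)) : Set (Finset (ι × κ)) :=
  {S | S.image Prod.fst ∈ K ∧ S.image Prod.snd ∈ L ∧
    ∀ p ∈ S, ∀ q ∈ S, (p.1 ≤ q.1 ∧ p.2 ≤ q.2) ∨ (q.1 ≤ p.1 ∧ q.2 ≤ p.2)}

/-- The geometric realization `|K| ⊆ ℝ^{V}` of a simplicial complex `K`. -/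
def geomReal {υ : Type*} (K : Set (Finset υ)) : Set (υ → ℝ) :=
  {f | (∀ v, 0 ≤ f v) ∧ ∃ σ ∈ K, (∀ v, v ∉ σ → f v = 0) ∧ ∑ v ∈ σ, f v = 1}

lemma elemCollapse_of_forall_superset {υ : Type*} {K : Set (Finset υ)} {τ σ : Finset υ}
    (hτ : τ ∈ K) (hne : τ.Nonempty) (hσ : σ ∈ K) (hτσ : τ ⊂ σ)
    (hsup : ∀ C ∈ K, τ ⊆ C → C = τ ∨ C = σ) :
    ElemCollapse K {C ∈ K | ¬ τ ⊆ C} := by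
  have hσ_facet : IsFacet K σ := by
    refine ⟨hσ, fun C hC hσC => (hsup C hC (hτσ.subset.trans hσC)).resolve_left ?_⟩
    rintro rfl
    exact hτσ.not_subset hσC
  have hτ_not_facet : ¬ IsFacet K τ := fun h => hτσ.ne (h.2 σ hσ hτσ.subset).symm
  refine ⟨τ, ⟨hτ, hne.ne_empty, hτ_not_facet, σ, ⟨hσ_facet, hτσ.subset⟩, ?_⟩, rfl⟩
  rintro F ⟨hF, hτF⟩
  exact (hsup F hF.1 hτF).resolve_left (by rintro rfl; exact hτ_not_facet hF)

lemma mem_geomReal_of_sum_eq_one {υ : Type*} {L : Set (Finset υ)} {g : υ → ℝ} (A : Finset υ)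
    (hg0 : ∀ v, 0 ≤ g v) (hgA : ∀ v ∉ A, g v = 0) (hsum : ∑ v ∈ A, g v = 1)
    (hL : {v ∈ A | g v ≠ 0} ∈ L) : g ∈ geomReal L :=
  ⟨hg0, _, hL,
    fun v hv => by_contra fun h => hv (mem_filter.2 ⟨by_contra fun hA => h (hgA v hA), h⟩),
    by rwa [sum_filter_ne_zero]⟩

section Pour

variable {ι : Type*} [LinearOrder ι] (V : Finset ι) (m : ι → ℝ)

def massAbove (x : ι) : ℝ := ∑ y ∈ V with x ≤ y, m y

def massStrictAbove (x : ι) : ℝ := ∑ y ∈ V with x < y, m y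

/-- The share of `x` when an amount `t` is poured into the distribution `m`, filling the points
of `V` from the top downwards. -/
def pour (t : ℝ) (x : ι) : ℝ := min (massAbove V m x) t - min (massStrictAbove V m x) t

variable {V m} {t : ℝ} {x y : ι}

lemma massAbove_eq_add (hmV : ∀ x ∉ V, m x = 0) (x : ι) :
    massAbove V m x = m x + massStrictAbove V m x := by
  have h : ∀ y, (if x ≤ y then m y else 0) =
      (if x = y then m y else 0) + (if x < y then m y else 0) := fun y => by
    rcases lt_trichotomy x y with h | rfl | h
    · simp [h, h.le, h.ne]
    · simp
    · simp [h.not_ge, h.ne', h.not_gt]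
  simp only [massAbove, massStrictAbove, sum_filter, h, sum_add_distrib, sum_ite_eq]
  split_ifs with hx
  · rfl
  · rw [hmV x hx]

lemma massAbove_le_massStrictAbove (hm0 : ∀ x, 0 ≤ m x) (hxy : x < y) :
    massAbove V m y ≤ massStrictAbove V m x :=
  sum_le_sum_of_subset_of_nonneg (monotone_filter_right _ fun _ _ => hxy.trans_le)
    fun _ _ _ => hm0 _

lemma massAbove_le_sum (hm0 : ∀ x, 0 ≤ m x) : massAbove V m x ≤ ∑ y ∈ V, m y :=
  sum_le_sum_of_subset_of_nonneg (filter_subset _ _) fun _ _ _ => hm0 _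

lemma pour_nonneg (hm0 : ∀ x, 0 ≤ m x) (hmV : ∀ x ∉ V, m x = 0) : 0 ≤ pour V m t x := by
  rw [pour, massAbove_eq_add hmV, sub_nonneg]
  exact min_le_min_right _ (le_add_of_nonneg_left (hm0 x))

lemma pour_le (hm0 : ∀ x, 0 ≤ m x) (hmV : ∀ x ∉ V, m x = 0) : pour V m t x ≤ m x := by
  have h : min (m x + massStrictAbove V m x) t ≤ m x + min (massStrictAbove V m x) t := by
    rw [← min_add_add_left]
    exact min_le_min_left _ (le_add_of_nonneg_left (hm0 x))
  rw [pour, massAbove_eq_add hmV]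
  linarith

lemma massStrictAbove_le_massAbove (hm0 : ∀ x, 0 ≤ m x) (hmV : ∀ x ∉ V, m x = 0) :
    massStrictAbove V m x ≤ massAbove V m x := by
  rw [massAbove_eq_add hmV]
  exact le_add_of_nonneg_left (hm0 x)

lemma pour_eq_of_massAbove_le (hm0 : ∀ x, 0 ≤ m x) (hmV : ∀ x ∉ V, m x = 0)
    (ht : massAbove V m x ≤ t) : pour V m t x = m x := by
  rw [pour, min_eq_left ht, min_eq_left ((massStrictAbove_le_massAbove hm0 hmV).trans ht),
    massAbove_eq_add hmV, add_sub_cancel_right]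

lemma pour_eq_zero_of_le_massStrictAbove (hm0 : ∀ x, 0 ≤ m x) (hmV : ∀ x ∉ V, m x = 0)
    (ht : t ≤ massStrictAbove V m x) : pour V m t x = 0 := by
  rw [pour, min_eq_right ht, min_eq_right (ht.trans (massStrictAbove_le_massAbove hm0 hmV)),
    sub_self]

lemma le_of_pour_lt_of_pour_pos (hm0 : ∀ x, 0 ≤ m x) (hmV : ∀ x ∉ V, m x = 0)
    (hx : pour V m t x < m x) (hy : 0 < pour V m t y) : x ≤ y := by
  have hxt : t < massAbove V m x := by
    by_contra! h
    exact hx.ne (pour_eq_of_massAbove_le hm0 hmV h)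
  have hyt : massStrictAbove V m y < t := by
    by_contra! h
    exact hy.ne' (pour_eq_zero_of_le_massStrictAbove hm0 hmV h)
  by_contra! hyx
  linarith [massAbove_le_massStrictAbove (V := V) hm0 hyx]

lemma min_sum_filter_add_eq {a b : ι → ℝ} (ha0 : ∀ x, 0 ≤ a x) (hb0 : ∀ x, 0 ≤ b x)
    (hab : ∀ x y, a x ≠ 0 → b y ≠ 0 → x ≤ y) {P : ι → Prop} [DecidablePred P]
    (hP : ∀ ⦃y z⦄, y ≤ z → P y → P z) :
    min (∑ y ∈ V with P y, (a y + b y)) (∑ y ∈ V, b y) = ∑ y ∈ V with P y, b y := by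
  by_cases h : ∃ y ∈ V, ¬ P y ∧ b y ≠ 0
  · obtain ⟨y, -, hPy, hby⟩ := h
    have ha : ∀ z ∈ {z ∈ V | P z}, a z + b z = b z := fun z hz => by
      by_contra hne
      exact hPy (hP (hab z y (fun h => hne (by rw [h, zero_add])) hby) (mem_filter.1 hz).2)
    rw [sum_congr rfl ha]
    exact min_eq_left (sum_le_sum_of_subset_of_nonneg (filter_subset _ _) fun _ _ _ => hb0 _)
  · push Not at h
    have hb : ∑ y ∈ V with P y, b y = ∑ y ∈ V, b y :=
      sum_filter_of_ne fun y hy hby => by_contra fun hPy => hby (h y hy hPy)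
    rw [← hb]
    exact min_eq_right (sum_le_sum fun y _ => le_add_of_nonneg_left (ha0 y))

lemma pour_add_eq_right {a b : ι → ℝ} (ha0 : ∀ x, 0 ≤ a x) (hb0 : ∀ x, 0 ≤ b x)
    (hbV : ∀ x ∉ V, b x = 0) (hab : ∀ x y, a x ≠ 0 → b y ≠ 0 → x ≤ y) :
    pour V (a + b) (∑ y ∈ V, b y) = b := by
  funext x
  have hle := min_sum_filter_add_eq (V := V) ha0 hb0 hab (P := (x ≤ ·))
    fun _ _ h h' => h'.trans h
  have hlt := min_sum_filter_add_eq (V := V) ha0 hb0 hab (P := (x < ·))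
    fun _ _ h h' => h'.trans_le h
  have hb := massAbove_eq_add hbV x
  simp only [pour, massAbove, massStrictAbove, Pi.add_apply] at hle hlt hb ⊢
  rw [hle, hlt, hb]
  ring

end Pour

namespace Prism

variable {ι : Type*} {V : Finset ι} {f : ι × Fin 2 → ℝ}

def weight (S : Finset (ι × Fin 2)) : ℕ := #S + #{p ∈ S | p.2 = 0}

lemma weight_lt_weight_of_ssubset {S T : Finset (ι × Fin 2)} (h : S ⊂ T) :
    weight S < weight T :=
  Nat.add_lt_add_of_lt_of_le (card_lt_card h) (card_le_card (filter_subset_filter _ h.subset))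

def fiberMass (f : ι × Fin 2 → ℝ) (x : ι) : ℝ := f (x, 0) + f (x, 1)

lemma fiberMass_nonneg (hf0 : ∀ p, 0 ≤ f p) (x : ι) : 0 ≤ fiberMass f x :=
  add_nonneg (hf0 _) (hf0 _)

lemma fiberMass_eq_zero (hfV : ∀ p : ι × Fin 2, p.1 ∉ V → f p = 0) (x : ι) (hx : x ∉ V) :
    fiberMass f x = 0 := by
  rw [fiberMass, hfV _ hx, hfV _ hx, add_zero]

variable [LinearOrder ι]

abbrev prism (K : Set (Finset ι)) : Set (Finset (ι × Fin 2)) := boxProd K Set.univ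

abbrev prismTop (K : Set (Finset ι)) : Set (Finset (ι × Fin 2)) :=
  boxProd K {σ | σ ⊆ {1}}

variable {K : Set (Finset ι)} {S T : Finset (ι × Fin 2)} {x y : ι}

lemma mem_prism :
    S ∈ prism K ↔ S.image Prod.fst ∈ K ∧ IsChain (· ≤ ·) (S : Set (ι × Fin 2)) := by
  simp only [boxProd, Set.mem_ofPred_eq, Set.mem_univ, true_and, IsChain,
    Set.Pairwise, mem_coe, Prod.le_def]
  refine and_congr_right fun _ => ⟨fun h p hp q hq _ => h p hp q hq, fun h p hp q hq => ?_⟩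
  by_cases hpq : p = q
  · subst hpq; exact Or.inl ⟨le_rfl, le_rfl⟩
  · exact h hp hq hpq

lemma mem_prismTop : S ∈ prismTop K ↔ S ∈ prism K ∧ ∀ p ∈ S, p.2 = 1 := by
  have h : S.image Prod.snd ⊆ {1} ↔ ∀ p ∈ S, p.2 = 1 := by simp [subset_iff]
  simp only [boxProd, Set.mem_ofPred_eq, Set.mem_univ, true_and, h]
  tauto

lemma mem_prism_of_subset (hdc : ∀ σ ∈ K, ∀ τ ⊆ σ, τ ∈ K) (hS : S ∈ prism K) (hTS : T ⊆ S) :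
    T ∈ prism K := by
  rw [mem_prism] at hS ⊢
  exact ⟨hdc _ hS.1 _ (image_subset_image hTS), hS.2.mono (coe_subset.2 hTS)⟩

lemma subset_product_of_mem_prism (hKV : ∀ σ ∈ K, σ ⊆ V) (hS : S ∈ prism K) :
    S ⊆ V ×ˢ univ := fun _ hp =>
  mem_product.2 ⟨hKV _ (mem_prism.1 hS).1 (mem_image_of_mem _ hp), mem_univ _⟩

lemma le_of_bottom_mem_of_top_mem (hS : IsChain (· ≤ ·) (S : Set (ι × Fin 2)))
    (hx : (x, 0) ∈ S) (hy : (y, 1) ∈ S) : x ≤ y := by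
  rcases hS.total (mem_coe.2 hx) (mem_coe.2 hy) with h | h
  · exact h.1
  · exact absurd h.2 (by simp)

def undouble (S : Finset (ι × Fin 2)) : Finset (ι × Fin 2) :=
  S.filter fun p => ¬ (p.2 = 1 ∧ (p.1, 0) ∈ S)

def IsLower (S : Finset (ι × Fin 2)) : Prop :=
  (∃ p ∈ S, p.2 = 0) ∧ ∀ x, (x, 0) ∈ S → (x, 1) ∉ S

def partialPrism (K : Set (Finset ι)) (R : Finset (Finset (ι × Fin 2))) :
    Set (Finset (ι × Fin 2)) :=
  {C ∈ prism K | (∀ p ∈ C, p.2 = 1) ∨ undouble C ∈ R}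

variable {C τ : Finset (ι × Fin 2)} {R : Finset (Finset (ι × Fin 2))} {m : ι}

lemma undouble_subset (S : Finset (ι × Fin 2)) : undouble S ⊆ S := filter_subset _ _

lemma filter_undouble_bottom (S : Finset (ι × Fin 2)) :
    {p ∈ undouble S | p.2 = 0} = {p ∈ S | p.2 = 0} := by
  rw [undouble, filter_filter]
  exact filter_congr fun p _ => and_iff_right_of_imp fun h0 h => by simp [h0] at h

lemma undouble_eq_self (h : ∀ x, (x, 0) ∈ S → (x, 1) ∉ S) : undouble S = S :=
  filter_true_of_mem fun p hp ⟨h1, h0⟩ => h _ h0 (by rwa [← h1])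

lemma undouble_eq_erase (hS : IsChain (· ≤ ·) (S : Set (ι × Fin 2)))
    (hx0 : (x, 0) ∈ S) (hx1 : (x, 1) ∈ S) : undouble S = S.erase (x, 1) := by
  ext ⟨y, e⟩
  simp only [undouble, mem_filter, mem_erase]
  match e with
  | 0 => simp
  | 1 =>
    have hy : (y, 1) ∈ S → ((y, 0) ∈ S ↔ y = x) := fun hy1 =>
      ⟨fun hy0 => le_antisymm (le_of_bottom_mem_of_top_mem hS hy0 hx1)
        (le_of_bottom_mem_of_top_mem hS hx0 hy1), by rintro rfl; exact hx0⟩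
    simp only [true_and, ne_eq, Prod.mk.injEq, and_true]
    tauto

lemma isLower_undouble (h : ∃ p ∈ S, p.2 = 0) : IsLower (undouble S) := by
  obtain ⟨p, hp, hp0⟩ := h
  refine ⟨⟨p, mem_filter.2 ⟨hp, fun h => by simp [hp0] at h⟩, hp0⟩, fun x _ hx1 => ?_⟩
  exact (mem_filter.1 hx1).2 ⟨rfl, undouble_subset S ‹_›⟩

lemma weight_lt_weight_undouble (hC : IsChain (· ≤ ·) (C : Set (ι × Fin 2))) (hτC : τ ⊆ C)
    (hlow : IsLower τ) (hm : (m, 0) ∈ τ) (hmax : ∀ x, (x, 0) ∈ τ → x ≤ m)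
    (hne : C ≠ τ) (hne' : C ≠ insert (m, 1) τ) : weight τ < weight (undouble C) := by
  by_cases hd : ∃ x, (x, 0) ∈ C ∧ (x, 1) ∈ C
  swap
  · push Not at hd
    rw [undouble_eq_self hd]
    exact weight_lt_weight_of_ssubset (hτC.ssubset_of_ne hne.symm)
  obtain ⟨x, hx0, hx1⟩ := hd
  by_cases hxτ : (x, 1) ∈ τ
  · -- `undouble C` trades the top vertex `(x, 1)` of `τ` for the bottom vertex `(x, 0)`
    have hx0τ : (x, 0) ∉ τ := fun h => hlow.2 x h hxτ
    have hcard : #τ < #C := card_lt_card ⟨hτC, fun h => hx0τ (h hx0)⟩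
    have hbot : #{p ∈ τ | p.2 = 0} < #{p ∈ C | p.2 = 0} :=
      card_lt_card ⟨filter_subset_filter _ hτC,
        fun h => hx0τ (mem_filter.1 (h (mem_filter.2 ⟨hx0, rfl⟩))).1⟩
    have hw : weight (undouble C) + 1 = #C + #{p ∈ C | p.2 = 0} := by
      rw [weight, filter_undouble_bottom, undouble_eq_erase hC hx0 hx1, card_erase_of_mem hx1]
      have := card_pos.2 ⟨_, hx1⟩
      omega
    unfold weight at hw ⊢
    omega
  · rw [undouble_eq_erase hC hx0 hx1]
    refine weight_lt_weight_of_ssubset ((subset_erase.2 ⟨hτC, hxτ⟩).ssubset_of_ne ?_)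
    intro heq
    have hx0τ : (x, 0) ∈ τ := heq ▸ mem_erase.2 ⟨by simp, hx0⟩
    have hxm : x = m :=
      le_antisymm (hmax x hx0τ) (le_of_bottom_mem_of_top_mem hC (hτC hm) hx1)
    exact hne' (by rw [heq, ← hxm, insert_erase hx1])

lemma isChain_insert_top (hτ : IsChain (· ≤ ·) (τ : Set (ι × Fin 2))) (hm : (m, 0) ∈ τ)
    (hmax : ∀ x, (x, 0) ∈ τ → x ≤ m) :
    IsChain (· ≤ ·) ((insert (m, 1) τ : Finset (ι × Fin 2)) : Set (ι × Fin 2)) := by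
  rw [coe_insert]
  refine hτ.insert fun ⟨y, e⟩ hy _ => ?_
  match e with
  | 0 => exact Or.inr ⟨hmax y hy, by simp⟩
  | 1 => exact Or.inl ⟨le_of_bottom_mem_of_top_mem hτ hm hy, le_rfl⟩

lemma insert_top_mem_prism (hτ : τ ∈ prism K) (hm : (m, 0) ∈ τ)
    (hmax : ∀ x, (x, 0) ∈ τ → x ≤ m) : insert (m, 1) τ ∈ prism K := by
  rw [mem_prism] at hτ ⊢
  rw [image_insert, insert_eq_of_mem (mem_image_of_mem Prod.fst hm)]
  exact ⟨hτ.1, isChain_insert_top hτ.2 hm hmax⟩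

lemma undouble_insert_top (hτ : IsChain (· ≤ ·) (τ : Set (ι × Fin 2))) (hlow : IsLower τ)
    (hm : (m, 0) ∈ τ) (hmax : ∀ x, (x, 0) ∈ τ → x ≤ m) : undouble (insert (m, 1) τ) = τ := by
  rw [undouble_eq_erase (isChain_insert_top hτ hm hmax) (mem_insert_of_mem hm)
    (mem_insert_self _ _), erase_insert (hlow.2 m hm)]

lemma IsLower.exists_max_bottom (hlow : IsLower τ) :
    ∃ m, (m, 0) ∈ τ ∧ ∀ x, (x, 0) ∈ τ → x ≤ m := by
  obtain ⟨p, hp, hp0⟩ := hlow.1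
  obtain ⟨q, hq, hqmax⟩ := exists_max_image {p ∈ τ | p.2 = 0} Prod.fst ⟨p, mem_filter.2 ⟨hp, hp0⟩⟩
  obtain ⟨hq, hq0⟩ := mem_filter.1 hq
  exact ⟨q.1, by rwa [← hq0], fun x hx => hqmax (x, 0) (mem_filter.2 ⟨hx, rfl⟩)⟩

lemma eq_or_eq_insert_of_mem_partialPrism (hR : ∀ S ∈ R, IsLower S) (hτR : τ ∈ R)
    (hmaxR : ∀ S ∈ R, weight S ≤ weight τ) (hm : (m, 0) ∈ τ)
    (hmax : ∀ x, (x, 0) ∈ τ → x ≤ m) (hC : C ∈ partialPrism K R) (hτC : τ ⊆ C) :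
    C = τ ∨ C = insert (m, 1) τ := by
  by_contra! h
  obtain ⟨hCP, hC1 | hCR⟩ := hC
  · simpa using hC1 _ (hτC hm)
  · exact (hmaxR _ hCR).not_gt
      (weight_lt_weight_undouble (mem_prism.1 hCP).2 hτC (hR τ hτR) hm hmax h.1 h.2)

lemma elemCollapse_partialPrism_erase (hR : ∀ S ∈ R, S ∈ prism K ∧ IsLower S) (hτR : τ ∈ R)
    (hmaxR : ∀ S ∈ R, weight S ≤ weight τ) :
    ElemCollapse (partialPrism K R) (partialPrism K (R.erase τ)) := by
  obtain ⟨hτP, hlow⟩ := hR τ hτR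
  have hτ := (mem_prism.1 hτP).2
  obtain ⟨m, hm, hmax⟩ := hlow.exists_max_bottom
  have hsup : ∀ C ∈ partialPrism K R, τ ⊆ C → C = τ ∨ C = insert (m, 1) τ :=
    fun C => eq_or_eq_insert_of_mem_partialPrism (fun S hS => (hR S hS).2) hτR hmaxR hm hmax
  have hundouble : ∀ C ∈ partialPrism K R, τ ⊆ C → undouble C = τ := fun C hC hτC => by
    rcases hsup C hC hτC with rfl | rfl
    exacts [undouble_eq_self hlow.2, undouble_insert_top hτ hlow hm hmax]
  have hτK : τ ∈ partialPrism K R := ⟨hτP, Or.inr (by rwa [undouble_eq_self hlow.2])⟩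
  have hσK : insert (m, 1) τ ∈ partialPrism K R :=
    ⟨insert_top_mem_prism hτP hm hmax, Or.inr (by rwa [undouble_insert_top hτ hlow hm hmax])⟩
  convert elemCollapse_of_forall_superset hτK ⟨_, hm⟩ hσK (ssubset_insert (hlow.2 m hm)) hsup
    using 1
  ext C
  simp only [partialPrism, Set.mem_ofPred_eq, mem_erase]
  constructor
  · rintro ⟨hCP, hC⟩
    have hCK : C ∈ partialPrism K R := ⟨hCP, hC.imp_right And.right⟩
    refine ⟨hCK, fun hτC => ?_⟩
    rcases hC with hC1 | ⟨hne, -⟩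
    · simpa using hC1 _ (hτC hm)
    · exact hne (hundouble C hCK hτC)
  · rintro ⟨⟨hCP, hC⟩, hτC⟩
    exact ⟨hCP, hC.imp_right fun h => ⟨fun heq => hτC (heq ▸ undouble_subset C), h⟩⟩

lemma collapses_partialPrism (R : Finset (Finset (ι × Fin 2)))
    (hR : ∀ S ∈ R, S ∈ prism K ∧ IsLower S) : Collapses (partialPrism K R) (partialPrism K ∅) := by
  induction R using Finset.strongInduction with
  | H R ih =>
    obtain rfl | hne := R.eq_empty_or_nonempty
    · exact .refl
    · obtain ⟨τ, hτR, hmax⟩ := exists_max_image R weight hne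
      exact .head (elemCollapse_partialPrism_erase hR hτR hmax)
        (ih _ (erase_ssubset hτR) fun S hS => hR S (mem_of_mem_erase hS))

lemma partialPrism_empty : partialPrism K ∅ = prismTop K := by
  ext C
  simp [partialPrism, mem_prismTop]

lemma partialPrism_eq_prism (hdc : ∀ σ ∈ K, ∀ τ ⊆ σ, τ ∈ K)
    (hR : ∀ S ∈ prism K, IsLower S → S ∈ R) : partialPrism K R = prism K := by
  refine Set.Subset.antisymm (fun C hC => hC.1) fun C hC => ⟨hC, or_iff_not_imp_left.2 fun h => ?_⟩
  push Not at h
  obtain ⟨p, hp, hp1⟩ := h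
  have hp0 : p.2 = 0 := by omega
  exact hR _ (mem_prism_of_subset hdc hC (undouble_subset C)) (isLower_undouble ⟨p, hp, hp0⟩)

theorem collapses_prism_prismTop (hKV : ∀ σ ∈ K, σ ⊆ V)
    (hdc : ∀ σ ∈ K, ∀ τ ⊆ σ, τ ∈ K) : Collapses (prism K) (prismTop K) := by
  classical
  let R := {S ∈ (V ×ˢ (univ : Finset (Fin 2))).powerset | S ∈ prism K ∧ IsLower S}
  rw [← partialPrism_eq_prism hdc (R := R) fun S hS hlow =>
    mem_filter.2 ⟨mem_powerset.2 (subset_product_of_mem_prism hKV hS), hS, hlow⟩,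
    ← partialPrism_empty]
  exact collapses_partialPrism R fun S hS => (mem_filter.1 hS).2

variable {t : ℝ}

def pushUp (V : Finset ι) (f : ι × Fin 2 → ℝ) (t : ℝ) (p : ι × Fin 2) : ℝ :=
  if p.2 = 1 then pour V (fiberMass f) t p.1 else fiberMass f p.1 - pour V (fiberMass f) t p.1

lemma pushUp_bottom : pushUp V f t (x, 0) = fiberMass f x - pour V (fiberMass f) t x := rfl

lemma pushUp_top : pushUp V f t (x, 1) = pour V (fiberMass f) t x := rfl

lemma sum_pushUp_fiber : ∑ e, pushUp V f t (x, e) = fiberMass f x := by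
  rw [Fin.sum_univ_two, pushUp_bottom, pushUp_top, sub_add_cancel]

lemma pushUp_nonneg (hf0 : ∀ p, 0 ≤ f p) (hfV : ∀ p : ι × Fin 2, p.1 ∉ V → f p = 0)
    (p : ι × Fin 2) : 0 ≤ pushUp V f t p := by
  obtain ⟨x, e⟩ := p
  match e with
  | 0 => exact sub_nonneg.2 (pour_le (fiberMass_nonneg hf0) (fiberMass_eq_zero hfV))
  | 1 => exact pour_nonneg (fiberMass_nonneg hf0) (fiberMass_eq_zero hfV)

lemma pushUp_eq_zero_of_fiberMass_eq_zero (hf0 : ∀ p, 0 ≤ f p)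
    (hfV : ∀ p : ι × Fin 2, p.1 ∉ V → f p = 0) (hx : fiberMass f x = 0) (e : Fin 2) :
    pushUp V f t (x, e) = 0 := by
  have h0 : 0 ≤ pour V (fiberMass f) t x :=
    pour_nonneg (fiberMass_nonneg hf0) (fiberMass_eq_zero hfV)
  have h1 : pour V (fiberMass f) t x ≤ fiberMass f x :=
    pour_le (fiberMass_nonneg hf0) (fiberMass_eq_zero hfV)
  match e with
  | 0 => rw [pushUp_bottom]; linarith
  | 1 => rw [pushUp_top]; linarith

lemma le_of_pushUp_ne_zero (hf0 : ∀ p, 0 ≤ f p) (hfV : ∀ p : ι × Fin 2, p.1 ∉ V → f p = 0)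
    (hx : pushUp V f t (x, 0) ≠ 0) (hy : pushUp V f t (y, 1) ≠ 0) : x ≤ y := by
  have hx' := (pushUp_nonneg hf0 hfV (x, 0)).lt_of_ne' hx
  have hy' := (pushUp_nonneg hf0 hfV (y, 1)).lt_of_ne' hy
  rw [pushUp_bottom, sub_pos] at hx'
  exact le_of_pour_lt_of_pour_pos (fiberMass_nonneg hf0) (fiberMass_eq_zero hfV) hx' hy'

lemma isChain_support_pushUp (hf0 : ∀ p, 0 ≤ f p) (hfV : ∀ p : ι × Fin 2, p.1 ∉ V → f p = 0) :
    IsChain (· ≤ ·) {p | pushUp V f t p ≠ 0} := by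
  rintro ⟨x, e⟩ hx ⟨y, e'⟩ hy -
  match e, e' with
  | 0, 0 | 1, 1 => exact (le_total x y).imp (⟨·, le_rfl⟩) (⟨·, le_rfl⟩)
  | 0, 1 => exact Or.inl ⟨le_of_pushUp_ne_zero hf0 hfV hx hy, by simp⟩
  | 1, 0 => exact Or.inr ⟨le_of_pushUp_ne_zero hf0 hfV hy hx, by simp⟩

lemma pushUp_sum_top_eq_self (hf0 : ∀ p, 0 ≤ f p) (hfV : ∀ p : ι × Fin 2, p.1 ∉ V → f p = 0)
    (hf : ∀ x y, f (x, 0) ≠ 0 → f (y, 1) ≠ 0 → x ≤ y) : pushUp V f (∑ x ∈ V, f (x, 1)) = f := by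
  have h := pour_add_eq_right (V := V) (a := fun x => f (x, 0)) (b := fun x => f (x, 1))
    (fun _ => hf0 _) (fun _ => hf0 _) (fun x hx => hfV (x, 1) hx) hf
  funext ⟨x, e⟩
  have hx := congrFun h x
  match e with
  | 0 => rw [pushUp_bottom]; exact hx ▸ add_sub_cancel_right _ _
  | 1 => exact hx

lemma pushUp_bottom_eq_zero (hf0 : ∀ p, 0 ≤ f p) (hfV : ∀ p : ι × Fin 2, p.1 ∉ V → f p = 0)
    (ht : ∑ x ∈ V, fiberMass f x ≤ t) : pushUp V f t (x, 0) = 0 := by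
  rw [pushUp_bottom, pour_eq_of_massAbove_le (fiberMass_nonneg hf0) (fiberMass_eq_zero hfV)
    ((massAbove_le_sum (fiberMass_nonneg hf0)).trans ht), sub_self]

lemma apply_eq_zero_of_fst_notMem (hKV : ∀ σ ∈ K, σ ⊆ V) (hf : f ∈ geomReal (prism K))
    (p : ι × Fin 2) (hp : p.1 ∉ V) : f p = 0 := by
  obtain ⟨-, S, hS, hfS, -⟩ := hf
  exact hfS p fun h => hp (mem_product.1 (subset_product_of_mem_prism hKV hS h)).1

lemma le_of_apply_ne_zero (hf : f ∈ geomReal (prism K)) (x y : ι) (hx : f (x, 0) ≠ 0)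
    (hy : f (y, 1) ≠ 0) : x ≤ y := by
  obtain ⟨-, S, hS, hfS, -⟩ := hf
  exact le_of_bottom_mem_of_top_mem (mem_prism.1 hS).2 (by_contra (hx <| hfS _ ·))
    (by_contra (hy <| hfS _ ·))

lemma sum_fiberMass_eq_one (hKV : ∀ σ ∈ K, σ ⊆ V) (hf : f ∈ geomReal (prism K)) :
    ∑ x ∈ V, fiberMass f x = 1 := by
  obtain ⟨-, S, hS, hfS, hsum⟩ := hf
  rw [← hsum, sum_subset (subset_product_of_mem_prism hKV hS) fun p _ hp => hfS p hp,
    sum_product]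
  simp only [fiberMass, Fin.sum_univ_two]

lemma apply_bottom_eq_zero (hf : f ∈ geomReal (prismTop K)) (x : ι) : f (x, 0) = 0 := by
  obtain ⟨-, S, hS, hfS, -⟩ := hf
  exact hfS _ fun h => by simpa using (mem_prismTop.1 hS).2 _ h

lemma pushUp_mem_geomReal (hKV : ∀ σ ∈ K, σ ⊆ V) (hdc : ∀ σ ∈ K, ∀ τ ⊆ σ, τ ∈ K)
    (hf : f ∈ geomReal (prism K)) {L : Set (Finset (ι × Fin 2))}
    (hL : ∀ T ∈ prism K, (∀ p ∈ T, pushUp V f t p ≠ 0) → T ∈ L) :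
    pushUp V f t ∈ geomReal L := by
  have hfV := apply_eq_zero_of_fst_notMem hKV hf
  have hsum := sum_fiberMass_eq_one hKV hf
  obtain ⟨hf0, S, hS, hfS, -⟩ := hf
  have hsupp : ∀ x e, pushUp V f t (x, e) ≠ 0 → x ∈ S.image Prod.fst := fun x e hp => by
    by_contra hx
    refine hp (pushUp_eq_zero_of_fiberMass_eq_zero hf0 hfV ?_ e)
    rw [fiberMass, hfS (x, 0) fun h => hx (mem_image_of_mem Prod.fst h),
      hfS (x, 1) fun h => hx (mem_image_of_mem Prod.fst h), add_zero]
  refine mem_geomReal_of_sum_eq_one (V ×ˢ univ) (pushUp_nonneg hf0 hfV) (fun ⟨x, e⟩ hp => ?_) ?_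
    (hL _ ?_ fun p hp => (mem_filter.1 hp).2)
  · exact pushUp_eq_zero_of_fiberMass_eq_zero hf0 hfV
      (fiberMass_eq_zero hfV x (by simpa using hp)) e
  · rw [sum_product, sum_congr rfl fun x _ => sum_pushUp_fiber, hsum]
  · refine mem_prism.2 ⟨hdc _ (mem_prism.1 hS).1 _ fun x hx => ?_,
      (isChain_support_pushUp hf0 hfV).mono fun p hp => (mem_filter.1 hp).2⟩
    obtain ⟨p, hp, rfl⟩ := mem_image.1 hx
    exact hsupp p.1 p.2 (mem_filter.1 hp).2

lemma continuous_pushUp (V : Finset ι) :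
    Continuous fun q : (ι × Fin 2 → ℝ) × ℝ =>
      pushUp V q.1 ((1 - q.2) * ∑ x ∈ V, q.1 (x, 1) + q.2) := by
  refine continuous_pi fun p => ?_
  simp only [pushUp, pour, massAbove, massStrictAbove, fiberMass]
  split_ifs <;> fun_prop

def prismHomotopy (hKV : ∀ σ ∈ K, σ ⊆ V) (hdc : ∀ σ ∈ K, ∀ τ ⊆ σ, τ ∈ K) :
    C(geomReal (prism K) × unitInterval, geomReal (prism K)) where
  toFun q := ⟨pushUp V q.1 ((1 - q.2) * ∑ x ∈ V, (q.1 : ι × Fin 2 → ℝ) (x, 1) + q.2),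
    pushUp_mem_geomReal hKV hdc q.1.2 fun _ h _ => h⟩
  continuous_toFun := ((continuous_pushUp V).comp
    (continuous_subtype_val.prodMap continuous_subtype_val)).subtype_mk _

variable (hKV : ∀ σ ∈ K, σ ⊆ V) (hdc : ∀ σ ∈ K, ∀ τ ⊆ σ, τ ∈ K)

lemma prismHomotopy_zero (f : geomReal (prism K)) : prismHomotopy hKV hdc (f, 0) = f := by
  refine Subtype.ext ?_
  simp only [prismHomotopy, ContinuousMap.coe_mk, Set.Icc.coe_zero, sub_zero, one_mul, add_zero]
  exact pushUp_sum_top_eq_self f.2.1 (apply_eq_zero_of_fst_notMem hKV f.2) (le_of_apply_ne_zero f.2)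

lemma prismHomotopy_one_mem (f : geomReal (prism K)) :
    (prismHomotopy hKV hdc (f, 1) : ι × Fin 2 → ℝ) ∈ geomReal (prismTop K) := by
  simp only [prismHomotopy, ContinuousMap.coe_mk, Set.Icc.coe_one, sub_self, zero_mul, zero_add]
  refine pushUp_mem_geomReal hKV hdc f.2 fun T hT hTne => mem_prismTop.2 ⟨hT, fun ⟨x, e⟩ hp => ?_⟩
  match e with
  | 0 => exact absurd (pushUp_bottom_eq_zero f.2.1 (apply_eq_zero_of_fst_notMem hKV f.2)
      (sum_fiberMass_eq_one hKV f.2).le) (hTne _ hp)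
  | 1 => rfl

lemma prismHomotopy_of_mem_top (f : geomReal (prism K))
    (hf : (f : ι × Fin 2 → ℝ) ∈ geomReal (prismTop K)) (s : unitInterval) :
    prismHomotopy hKV hdc (f, s) = f := by
  have htop : ∑ x ∈ V, (f : ι × Fin 2 → ℝ) (x, 1) = 1 := by
    simpa [fiberMass, apply_bottom_eq_zero hf] using sum_fiberMass_eq_one hKV f.2
  refine Subtype.ext ?_
  simp only [prismHomotopy, ContinuousMap.coe_mk, htop, mul_one, sub_add_cancel]
  rw [← htop]
  exact pushUp_sum_top_eq_self f.2.1 (apply_eq_zero_of_fst_notMem hKV f.2) (le_of_apply_ne_zero f.2)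

end Prism

-- `Δ¹` is the full simplex on `Fin 2`, whose top vertex `1` plays the role of `2`.
theorem boxProd_collapses_onto_top_general {ι : Type*} [LinearOrder ι]
    (K : Set (Finset ι)) (hfin : K.Finite)
    (hdc : ∀ σ ∈ K, ∀ τ ⊆ σ, τ ∈ K) :
    Collapses (boxProd K (Set.univ : Set (Finset (Fin 2))))
        (boxProd K {σ : Finset (Fin 2) | σ ⊆ {1}}) ∧
      ∃ H : C(↥(geomReal (boxProd K (Set.univ : Set (Finset (Fin 2))))) × unitInterval,
          ↥(geomReal (boxProd K (Set.univ : Set (Finset (Fin 2)))))),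
        (∀ x, H (x, 0) = x) ∧
        (∀ x, (H (x, 1) : (ι × Fin 2) → ℝ) ∈
            geomReal (boxProd K {σ : Finset (Fin 2) | σ ⊆ {1}})) ∧
        (∀ x : ↥(geomReal (boxProd K (Set.univ : Set (Finset (Fin 2))))),
          (x : (ι × Fin 2) → ℝ) ∈ geomReal (boxProd K {σ : Finset (Fin 2) | σ ⊆ {1}}) →
          ∀ t, H (x, t) = x) := by
  obtain ⟨V, hV⟩ := hfin.bddAbove
  exact ⟨Prism.collapses_prism_prismTop hV hdc, Prism.prismHomotopy hV hdc,
    Prism.prismHomotopy_zero hV hdc, Prism.prismHomotopy_one_mem hV hdc,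
    Prism.prismHomotopy_of_mem_top hV hdc⟩

/-- **Example 5.2.2.** For a (finite) simplicial complex `K` with linearly ordered
vertices, the prism `K ⊠ Δ¹` collapses onto `K ⊠ {2}`; in particular `|K ⊠ {2}|` is a
deformation retract of `|K ⊠ Δ¹|`.  Here `Δ¹` is the full simplex on the two-point
ordered set (`Fin 2`), and `{2}` is its top vertex. -/
theorem boxProd_collapses_onto_top {ι : Type*} [LinearOrder ι]
    (K : Set (Finset ι)) (hfin : K.Finite) (hempty : ∅ ∈ K)
    (hdc : ∀ σ ∈ K, ∀ τ ⊆ σ, τ ∈ K) :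
    Collapses (boxProd K (Set.univ : Set (Finset (Fin 2))))
        (boxProd K {σ : Finset (Fin 2) | σ ⊆ {1}}) ∧
      ∃ H : C(↥(geomReal (boxProd K (Set.univ : Set (Finset (Fin 2))))) × unitInterval,
          ↥(geomReal (boxProd K (Set.univ : Set (Finset (Fin 2)))))),
        (∀ x, H (x, 0) = x) ∧
        (∀ x, (H (x, 1) : (ι × Fin 2) → ℝ) ∈
            geomReal (boxProd K {σ : Finset (Fin 2) | σ ⊆ {1}})) ∧
        (∀ x : ↥(geomReal (boxProd K (Set.univ : Set (Finset (Fin 2))))),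
          (x : (ι × Fin 2) → ℝ) ∈ geomReal (boxProd K {σ : Finset (Fin 2) | σ ⊆ {1}}) →
          ∀ t, H (x, t) = x) :=
  boxProd_collapses_onto_top_general K hfin hdc
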